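/- arXiv:2408.06695 — 2 statements merged into one kernel-verified Lean document; each statement's English description precedes it below -/
import Mathlib

section
/- Under the sensor setup, posterior definitions, and network setup, suppose there is a single real symmetric positive semidefinite n×n matrix M such that H_j^T (R_j^u)^{-1} R_j (R_j^u)^{-1} H_j = M for every j ∈ {1,…,N}. Then for all integers m ≥ d ≥ 1: 0 ⪯ Φ^{ts(m)} ⪯ Φ^{ts(d)}, and Σ^{t(m)} ⪰ Σ^{(m)}, where the superscript (m) indicates the quantity computed with the fusion weights a_j^{(m)} = N·[𝓛^m]_{ij}. (Corollary 1 of the paper.) -/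
/-!
With a common `M`, `Φᵗˢ` is the scalar `∑ⱼ (aⱼ² - aⱼ)` times `M`. For the consensus weights
`aⱼ = N wⱼ`, `w` the `i`-th row of `𝓛ᵐ`, this scalar is `N (N ‖w‖² - 1)`: Cauchy–Schwarz gives
`N ‖w‖² ≥ (∑ⱼ wⱼ)² = 1`, and Jensen's inequality along the columns of the doubly stochastic `𝓛`
shows that `‖w‖²` does not increase with `m`.

For the covariances, `Σᵗ - Σ = A P Aᵀ + ∑ⱼ aⱼ Eⱼ Rⱼ Eⱼᵀ + Σᶠ Φᵗˢ Σᶠ`, where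
`A = Σᶠ (Pᶠ)⁻¹ - Σ P⁻¹` and `Eⱼ = Σᶠ Hⱼᵀ (Rⱼᵘ)⁻¹ - Σ Hⱼᵀ Rⱼ⁻¹` compare the gains of the
mismatched and of the optimal filter; every term on the right is positive semidefinite.
-/

open Matrix

section Consensus

variable {ι : Type*} [Fintype ι]

theorem one_le_card_mul_sum_sq {w : ι → ℝ} (hw : ∑ j, w j = 1) :
    1 ≤ Fintype.card ι * ∑ j, w j ^ 2 := by
  simpa [hw] using sq_sum_le_card_mul_sum_sq (s := Finset.univ) (f := w)

theorem sum_card_mul_sq_sub_card_mul {w : ι → ℝ} (hw : ∑ j, w j = 1) :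
    ∑ j, ((Fintype.card ι * w j) ^ 2 - Fintype.card ι * w j)
      = Fintype.card ι * (Fintype.card ι * ∑ j, w j ^ 2 - 1) := by
  simp only [Finset.sum_sub_distrib, mul_pow, ← Finset.mul_sum, hw]
  ring

variable [DecidableEq ι] {W : Matrix ι ι ℝ}

theorem sum_sq_vecMul_le_of_mem_doublyStochastic (hW : W ∈ doublyStochastic ℝ ι) (v : ι → ℝ) :
    ∑ j, (v ᵥ* W) j ^ 2 ≤ ∑ j, v j ^ 2 := by
  have hjensen : ∀ j, (v ᵥ* W) j ^ 2 ≤ ∑ r, W r j * v r ^ 2 := fun j => by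
    simpa [vecMul, dotProduct, mul_comm] using
      (even_two.convexOn_pow (𝕜 := ℝ)).map_sum_le (t := Finset.univ) (p := v)
        (fun r _ => nonneg_of_mem_doublyStochastic hW (i := r) (j := j))
        (sum_col_of_mem_doublyStochastic hW j) (fun _ _ => Set.mem_univ _)
  calc ∑ j, (v ᵥ* W) j ^ 2 ≤ ∑ j, ∑ r, W r j * v r ^ 2 := Finset.sum_le_sum fun j _ => hjensen j
    _ = ∑ r, v r ^ 2 := by
      rw [Finset.sum_comm]
      simp [← Finset.sum_mul, sum_row_of_mem_doublyStochastic hW]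

theorem antitone_sum_sq_pow_apply (hW : W ∈ doublyStochastic ℝ ι) (i : ι) :
    Antitone fun k : ℕ => ∑ j, (W ^ k) i j ^ 2 :=
  antitone_nat_of_succ_le fun k => by
    rw [pow_succ W k]
    exact sum_sq_vecMul_le_of_mem_doublyStochastic hW ((W ^ k) i)

end Consensus

theorem Matrix.PosDef.transpose_eq {R k : Type*} [Ring R] [PartialOrder R] [StarRing R]
    [TrivialStar R] {A : Matrix k k R} (hA : A.PosDef) : Aᵀ = A :=
  (isHermitian_iff_isSymm.1 hA.isHermitian).eq

theorem Matrix.PosSemidef.mul_mul_transpose_same {R k l : Type*} [CommRing R] [PartialOrder R]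
    [StarRing R] [TrivialStar R] [Fintype k] [Fintype l] {A : Matrix k k R} (hA : A.PosSemidef)
    (B : Matrix l k R) : (B * A * Bᵀ).PosSemidef := by
  simpa only [conjTranspose_eq_transpose_of_trivial] using hA.mul_mul_conjTranspose_same B

theorem sub_mul_inv_mul_mul_transpose_sub {K n k : Type*} [CommRing K] [Fintype k]
    [DecidableEq k] (X Y : Matrix n k K) {U Q : Matrix k k K} (hU : Uᵀ = U) (hQ : Qᵀ = Q)
    (hQdet : IsUnit Q.det) :
    (X * U - Y * Q⁻¹) * Q * (X * U - Y * Q⁻¹)ᵀ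
      = X * U * Q * U * Xᵀ - X * U * Yᵀ - Y * U * Xᵀ + Y * Q⁻¹ * Yᵀ := by
  simp only [transpose_sub, transpose_mul, transpose_nonsing_inv, hU, hQ, Matrix.sub_mul,
    Matrix.mul_sub, Matrix.mul_assoc, mul_nonsing_inv_cancel_left _ _ hQdet,
    nonsing_inv_mul_cancel_left _ _ hQdet]
  abel

noncomputable section Fusion

variable {ι n : Type*} [Fintype ι] {m : ι → Type*}
  [∀ j, Fintype (m j)] [∀ j, DecidableEq (m j)]
  (H : ∀ j, Matrix (m j) n ℝ) (R Ru : ∀ j, Matrix (m j) (m j) ℝ)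

/-- In the paper's notation `Φ = fusedInfo H R a`, `Φᶠ = fusedInfo H Ru a`,
`Φᵗ = mismatchInfo H R Ru (a ^ 2)`, `Φᵗˢ = mismatchInfo H R Ru (a ^ 2 - a)`, `Σ = posteriorCov P Φ`,
`Σᶠ = posteriorCov Pf Φᶠ` and `Σᵗ = trueCov P Pf Φᶠ Φᵗ`. -/
def fusedInfo (a : ι → ℝ) : Matrix n n ℝ :=
  ∑ j, a j • ((H j)ᵀ * (R j)⁻¹ * H j)

def mismatchInfo (c : ι → ℝ) : Matrix n n ℝ :=
  ∑ j, c j • ((H j)ᵀ * (Ru j)⁻¹ * R j * (Ru j)⁻¹ * H j)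

variable {H R Ru}

theorem mismatchInfo_add (c d : ι → ℝ) :
    mismatchInfo H R Ru (c + d) = mismatchInfo H R Ru c + mismatchInfo H R Ru d := by
  simp only [mismatchInfo, Pi.add_apply, add_smul, Finset.sum_add_distrib]

variable [Fintype n]

theorem posSemidef_fusedInfo (hR : ∀ j, (R j).PosDef) {a : ι → ℝ} (ha : ∀ j, 0 ≤ a j) :
    (fusedInfo H R a).PosSemidef :=
  posSemidef_sum _ fun j _ =>
    ((hR j).inv.posSemidef.conjTranspose_mul_mul_same (H j)).smul (ha j)

theorem sum_smul_gainDiff_mul_mul_transpose {S Sf : Matrix n n ℝ} (hS : Sᵀ = S) (hSf : Sfᵀ = Sf)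
    (hR : ∀ j, (R j)ᵀ = R j) (hRdet : ∀ j, IsUnit (R j).det) (hRu : ∀ j, (Ru j)ᵀ = Ru j)
    (a : ι → ℝ) :
    ∑ j, a j • ((Sf * (H j)ᵀ * (Ru j)⁻¹ - S * (H j)ᵀ * (R j)⁻¹) * R j
        * (Sf * (H j)ᵀ * (Ru j)⁻¹ - S * (H j)ᵀ * (R j)⁻¹)ᵀ)
      = Sf * mismatchInfo H R Ru a * Sf - Sf * fusedInfo H Ru a * S
        - S * fusedInfo H Ru a * Sf + S * fusedInfo H R a * S := by
  have hRuinv : ∀ j, (Ru j)⁻¹ᵀ = (Ru j)⁻¹ := fun j => by rw [transpose_nonsing_inv, hRu]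
  calc _ = ∑ j, (Sf * (a j • ((H j)ᵀ * (Ru j)⁻¹ * R j * (Ru j)⁻¹ * H j)) * Sf
          - Sf * (a j • ((H j)ᵀ * (Ru j)⁻¹ * H j)) * S
          - S * (a j • ((H j)ᵀ * (Ru j)⁻¹ * H j)) * Sf
          + S * (a j • ((H j)ᵀ * (R j)⁻¹ * H j)) * S) := by
        refine Finset.sum_congr rfl fun j _ => ?_
        rw [sub_mul_inv_mul_mul_transpose_sub _ _ (hRuinv j) (hR j) (hRdet j)]
        simp only [transpose_mul, transpose_transpose, hS, hSf, Matrix.mul_smul, Matrix.smul_mul,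
          smul_sub, smul_add, Matrix.mul_assoc]
    _ = _ := by
        simp only [fusedInfo, mismatchInfo, Finset.sum_add_distrib, Finset.sum_sub_distrib,
          ← Finset.mul_sum, ← Finset.sum_mul]

variable [DecidableEq n]

def posteriorCov (P Φ : Matrix n n ℝ) : Matrix n n ℝ := (P⁻¹ + Φ)⁻¹

def trueCov (P Pf Φf Φt : Matrix n n ℝ) : Matrix n n ℝ :=
  posteriorCov Pf Φf * Pf⁻¹ * P * Pf⁻¹ * posteriorCov Pf Φf
    + posteriorCov Pf Φf * Φt * posteriorCov Pf Φf

theorem posDef_posteriorCov {P Φ : Matrix n n ℝ} (hP : P.PosDef) (hΦ : Φ.PosSemidef) :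
    (posteriorCov P Φ).PosDef :=
  (hP.inv.add_posSemidef hΦ).inv

theorem posteriorCov_mul_inv_mul {P Φ : Matrix n n ℝ} (hP : P.PosDef) (hΦ : Φ.PosSemidef)
    (X : Matrix n n ℝ) : posteriorCov P Φ * P⁻¹ * X = X - posteriorCov P Φ * Φ * X := by
  refine eq_sub_of_add_eq ?_
  rw [← Matrix.add_mul, ← Matrix.mul_add, posteriorCov,
    nonsing_inv_mul _ ((isUnit_iff_isUnit_det _).1 (hP.inv.add_posSemidef hΦ).isUnit),
    Matrix.one_mul]

theorem mul_inv_mul_posteriorCov {P Φ : Matrix n n ℝ} (hP : P.PosDef) (hΦ : Φ.PosSemidef)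
    (X : Matrix n n ℝ) : X * P⁻¹ * posteriorCov P Φ = X - X * Φ * posteriorCov P Φ := by
  refine eq_sub_of_add_eq ?_
  rw [Matrix.mul_assoc, Matrix.mul_assoc, ← Matrix.mul_add, ← Matrix.add_mul, posteriorCov,
    mul_nonsing_inv _ ((isUnit_iff_isUnit_det _).1 (hP.inv.add_posSemidef hΦ).isUnit),
    Matrix.mul_one]

theorem posSemidef_trueCov_sub_posteriorCov {P Pf : Matrix n n ℝ} (hP : P.PosDef)
    (hPf : Pf.PosDef) (hR : ∀ j, (R j).PosDef) (hRu : ∀ j, (Ru j).PosDef) {a : ι → ℝ}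
    (ha : ∀ j, 0 ≤ a j) (hts : (mismatchInfo H R Ru (a ^ 2 - a)).PosSemidef) :
    (trueCov P Pf (fusedInfo H Ru a) (mismatchInfo H R Ru (a ^ 2))
      - posteriorCov P (fusedInfo H R a)).PosSemidef := by
  have hΦ := posSemidef_fusedInfo (H := H) hR ha
  have hΦf := posSemidef_fusedInfo (H := H) hRu ha
  have hS := (posDef_posteriorCov hP hΦ).transpose_eq
  have hSf := (posDef_posteriorCov hPf hΦf).transpose_eq
  have e1 := posteriorCov_mul_inv_mul hPf hΦf (posteriorCov P (fusedInfo H R a))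
  have e2 := mul_inv_mul_posteriorCov hPf hΦf (posteriorCov P (fusedInfo H R a))
  have e3 := mul_inv_mul_posteriorCov hP hΦ (posteriorCov P (fusedInfo H R a))
  unfold trueCov
  set S := posteriorCov P (fusedInfo H R a)
  set Sf := posteriorCov Pf (fusedInfo H Ru a)
  have hprior := sub_mul_inv_mul_mul_transpose_sub Sf S hPf.inv.transpose_eq hP.transpose_eq
    ((isUnit_iff_isUnit_det _).1 hP.isUnit)
  have hsensors := sum_smul_gainDiff_mul_mul_transpose (H := H) hS hSf
    (fun j => (hR j).transpose_eq)
    (fun j => (isUnit_iff_isUnit_det _).1 (hR j).isUnit) (fun j => (hRu j).transpose_eq) a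
  rw [hS, hSf] at hprior
  have hsplit : mismatchInfo H R Ru (a ^ 2)
      = mismatchInfo H R Ru a + mismatchInfo H R Ru (a ^ 2 - a) := by
    rw [← mismatchInfo_add, add_sub_cancel]
  have key : Sf * Pf⁻¹ * P * Pf⁻¹ * Sf + Sf * mismatchInfo H R Ru (a ^ 2) * Sf - S
      = (Sf * Pf⁻¹ - S * P⁻¹) * P * (Sf * Pf⁻¹ - S * P⁻¹)ᵀ
        + ∑ j, a j • ((Sf * (H j)ᵀ * (Ru j)⁻¹ - S * (H j)ᵀ * (R j)⁻¹) * R j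
          * (Sf * (H j)ᵀ * (Ru j)⁻¹ - S * (H j)ᵀ * (R j)⁻¹)ᵀ)
        + Sf * mismatchInfo H R Ru (a ^ 2 - a) * Sf := by
    -- the cross terms collapse to `S` through `Σᶠ (Pᶠ⁻¹ + Φᶠ) = 1` and `(P⁻¹ + Φ) Σ = 1`
    rw [hprior, hsensors, hsplit, e1, e2, e3, Matrix.mul_add, Matrix.add_mul]
    abel
  rw [key]
  refine .add (.add ?_ (posSemidef_sum _ fun j _ => ?_)) ?_
  · exact hP.posSemidef.mul_mul_transpose_same _
  · exact ((hR j).posSemidef.mul_mul_transpose_same _).smul (ha j)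
  · simpa only [hSf] using hts.mul_mul_transpose_same Sf

end Fusion

theorem stmt11_general {n N : ℕ}
    (md : Fin N → ℕ)
    (H : ∀ j, Matrix (Fin (md j)) (Fin n) ℝ)
    (R Ru : ∀ j, Matrix (Fin (md j)) (Fin (md j)) ℝ)
    (hR : ∀ j, (R j).PosDef) (hRu : ∀ j, (Ru j).PosDef)
    (P : Matrix (Fin n) (Fin n) ℝ) (hP : P.PosDef)
    (Pf : Matrix (Fin n) (Fin n) ℝ) (hPf : Pf.PosDef)
    (W : Matrix (Fin N) (Fin N) ℝ)
    (hnonneg : ∀ p q, 0 ≤ W p q)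
    (hrow : ∀ p, ∑ q, W p q = 1)
    (hcol : ∀ q, ∑ p, W p q = 1)
    (i : Fin N)
    (M : Matrix (Fin n) (Fin n) ℝ) (hM : M.PosSemidef)
    (hMeq : ∀ j, (H j)ᵀ * (Ru j)⁻¹ * R j * (Ru j)⁻¹ * H j = M)
    (Phits Phi Phif Phit Sig Sigf Sigt : (Fin N → ℝ) → Matrix (Fin n) (Fin n) ℝ)
    (hPhits : ∀ a, Phits a =
      ∑ j, ((a j) ^ 2 - a j) • ((H j)ᵀ * (Ru j)⁻¹ * R j * (Ru j)⁻¹ * H j))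
    (hPhi : ∀ a, Phi a = ∑ j, a j • ((H j)ᵀ * (R j)⁻¹ * H j))
    (hPhif : ∀ a, Phif a = ∑ j, a j • ((H j)ᵀ * (Ru j)⁻¹ * H j))
    (hPhit : ∀ a, Phit a =
      ∑ j, (a j) ^ 2 • ((H j)ᵀ * (Ru j)⁻¹ * R j * (Ru j)⁻¹ * H j))
    (hSig : ∀ a, Sig a = (P⁻¹ + Phi a)⁻¹)
    (hSigf : ∀ a, Sigf a = (Pf⁻¹ + Phif a)⁻¹)
    (hSigt : ∀ a, Sigt a =
      Sigf a * Pf⁻¹ * P * Pf⁻¹ * Sigf a + Sigf a * Phit a * Sigf a) :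
    ∀ d m : ℕ, 1 ≤ d → d ≤ m →
      (Phits (fun j => (N : ℝ) * (W ^ m) i j)).PosSemidef ∧
      (Phits (fun j => (N : ℝ) * (W ^ d) i j)
        - Phits (fun j => (N : ℝ) * (W ^ m) i j)).PosSemidef ∧
      (Sigt (fun j => (N : ℝ) * (W ^ m) i j)
        - Sig (fun j => (N : ℝ) * (W ^ m) i j)).PosSemidef := by
  intro d m _ hdm
  have hW : W ∈ doublyStochastic ℝ (Fin N) := mem_doublyStochastic_iff_sum.2 ⟨hnonneg, hrow, hcol⟩
  have hrow_pow (k : ℕ) := sum_row_of_mem_doublyStochastic (pow_mem hW k) i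
  set q : ℕ → ℝ := fun k => N * (N * ∑ j, (W ^ k) i j ^ 2 - 1)
  have hPhits_eq (k : ℕ) : Phits (fun j => (N : ℝ) * (W ^ k) i j) = q k • M := by
    simpa [hPhits, hMeq, ← Finset.sum_smul] using
      congrArg (· • M) (sum_card_mul_sq_sub_card_mul (hrow_pow k))
  have hts (k : ℕ) : (Phits fun j => (N : ℝ) * (W ^ k) i j).PosSemidef := by
    rw [hPhits_eq]
    refine hM.smul (mul_nonneg N.cast_nonneg (sub_nonneg.2 ?_))
    simpa using one_le_card_mul_sum_sq (hrow_pow k)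
  refine ⟨hts m, ?_, ?_⟩
  · rw [hPhits_eq, hPhits_eq, ← sub_smul]
    refine hM.smul (sub_nonneg.2 ?_)
    have hsq_anti := antitone_sum_sq_pow_apply hW i hdm
    simp only [q]
    gcongr
  · rw [hSigt, hSig, hSigf, hPhit, hPhi, hPhif]
    have hts_m := hts m
    rw [hPhits] at hts_m
    exact posSemidef_trueCov_sub_posteriorCov hP hPf hR hRu
      (fun j => mul_nonneg N.cast_nonneg (nonneg_of_mem_doublyStochastic (pow_mem hW m))) hts_m

/-- Corollary 1 of the paper: if `Hⱼᵀ (Rⱼᵘ)⁻¹ Rⱼ (Rⱼᵘ)⁻¹ Hⱼ = M` for all sensors `j`,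
then for all `m ≥ d ≥ 1`, `0 ⪯ Φ^{ts(m)} ⪯ Φ^{ts(d)}` and `Σ^{t(m)} ⪰ Σ^{(m)}`,
with the consensus weights `a_j^{(m)} = N [𝓛^m]_{ij}`. -/
theorem stmt11 {n N : ℕ} (hn : 1 ≤ n) (hN : 1 ≤ N)
    (md : Fin N → ℕ) (hmd : ∀ j, 1 ≤ md j)
    (H : ∀ j, Matrix (Fin (md j)) (Fin n) ℝ)
    (R Ru : ∀ j, Matrix (Fin (md j)) (Fin (md j)) ℝ)
    (hRsymm : ∀ j, (R j).IsSymm) (hRusymm : ∀ j, (Ru j).IsSymm)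
    (hR : ∀ j, (R j).PosDef) (hRu : ∀ j, (Ru j).PosDef)
    (P dQ : Matrix (Fin n) (Fin n) ℝ) (hPsymm : P.IsSymm) (hP : P.PosDef)
    (hdQsymm : dQ.IsSymm)
    (Pf : Matrix (Fin n) (Fin n) ℝ) (hPfdef : Pf = P + dQ) (hPf : Pf.PosDef)
    (W : Matrix (Fin N) (Fin N) ℝ)
    (hnonneg : ∀ p q, 0 ≤ W p q)
    (hrow : ∀ p, ∑ q, W p q = 1)
    (hcol : ∀ q, ∑ p, W p q = 1)
    (hdiag : ∀ p, 0 < W p p)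
    (hconn : ∀ p q, ∃ m : ℕ, 0 < (W ^ m) p q)
    (i : Fin N)
    (M : Matrix (Fin n) (Fin n) ℝ) (hM : M.PosSemidef)
    (hMeq : ∀ j, (H j)ᵀ * (Ru j)⁻¹ * R j * (Ru j)⁻¹ * H j = M)
    (Phits Phi Phif Phit Sig Sigf Sigt : (Fin N → ℝ) → Matrix (Fin n) (Fin n) ℝ)
    (hPhits : ∀ a, Phits a =
      ∑ j, ((a j) ^ 2 - a j) • ((H j)ᵀ * (Ru j)⁻¹ * R j * (Ru j)⁻¹ * H j))
    (hPhi : ∀ a, Phi a = ∑ j, a j • ((H j)ᵀ * (R j)⁻¹ * H j))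
    (hPhif : ∀ a, Phif a = ∑ j, a j • ((H j)ᵀ * (Ru j)⁻¹ * H j))
    (hPhit : ∀ a, Phit a =
      ∑ j, (a j) ^ 2 • ((H j)ᵀ * (Ru j)⁻¹ * R j * (Ru j)⁻¹ * H j))
    (hSig : ∀ a, Sig a = (P⁻¹ + Phi a)⁻¹)
    (hSigf : ∀ a, Sigf a = (Pf⁻¹ + Phif a)⁻¹)
    (hSigt : ∀ a, Sigt a =
      Sigf a * Pf⁻¹ * P * Pf⁻¹ * Sigf a + Sigf a * Phit a * Sigf a) :
    ∀ d m : ℕ, 1 ≤ d → d ≤ m →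
      (Phits (fun j => (N : ℝ) * (W ^ m) i j)).PosSemidef ∧
      (Phits (fun j => (N : ℝ) * (W ^ d) i j)
        - Phits (fun j => (N : ℝ) * (W ^ m) i j)).PosSemidef ∧
      (Sigt (fun j => (N : ℝ) * (W ^ m) i j)
        - Sig (fun j => (N : ℝ) * (W ^ m) i j)).PosSemidef :=
  stmt11_general md H R Ru hR hRu P hP Pf hPf W hnonneg hrow hcol i M hM hMeq Phits Phi Phif Phit
    Sig Sigf Sigt hPhits hPhi hPhif hPhit hSig hSigf hSigt
end

section
/- Under the sensor setup, posterior definitions with ΔQ = 0, and network setup: (1) if ΔR_j ⪰ 0 for all j, then with the unit fusion weights a_j = 1 for all j (the limit of the weights a_j^{(L)} = N·[𝓛^L]_{ij} as L → ∞) one has Σ ⪯ Σ^t ⪯ Σ^f; (2) if ΔR_j ⪯ 0 for all j, then with the unit fusion weights one has Σ^f ⪯ Σ ⪯ Σ^t; (3) if ΔR_j = 0 for all j, then Σ^f = Σ for any nonnegative weights, and Σ^{t(L)} − Σ^{(L)} converges entrywise to the zero matrix as L → ∞. (Theorem 4 of the paper, with the asymptotic inequalities stated at the limiting unit weights.) 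-/
/-!
Write `S = Σ` and `K = Σᶠ` at unit weights. Fusing with the true covariances is optimal:
`Σᵗ - Σ = (K - S) P⁻¹ (K - S)ᵀ + ∑ⱼ Xⱼ Rⱼ Xⱼᵀ` with `Xⱼ = K Hⱼᵀ (Rⱼᵘ)⁻¹ - S Hⱼᵀ Rⱼ⁻¹`, so
`Σ ⪯ Σᵗ` always. Since `K (P⁻¹ + Φᶠ) K = K`, also `Σᶠ - Σᵗ = ∑ⱼ Yⱼ ΔRⱼ Yⱼᵀ` with
`Yⱼ = K Hⱼᵀ (Rⱼᵘ)⁻¹`, and `Σ - Σᶠ ⪰ 0` for `ΔR ⪯ 0` is antitonicity of matrix inversion.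

For `ΔR = 0`, `Σᵗ(a) - Σ(a)` is continuous in the weights and vanishes at `a = 1`, so it remains
to see `N [𝓛ᴸ]ᵢⱼ → 1`. Some power `𝓛ᴹ` has all entries `≥ δ > 0`, hence shrinks the spread
`max - min` of every vector by the factor `1 - Nδ`; the columns of `𝓛ᴸ` therefore become
constant, and as they sum to `1` they tend to `1 / N`.
-/

open Matrix Filter Finset Topology

namespace Matrix

section Loewner

variable {k m : Type*}

lemma PosSemidef.transpose_eq {M : Matrix k k ℝ} (hM : M.PosSemidef) : Mᵀ = M :=
  (isHermitian_iff_isSymm.mp hM.isHermitian).eq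

variable [Fintype k] [Fintype m]

lemma PosSemidef.mul_mul_transpose_same_s14 {A : Matrix m m ℝ} (hA : A.PosSemidef)
    (B : Matrix k m ℝ) : (B * A * Bᵀ).PosSemidef :=
  hA.mul_mul_conjTranspose_same B

variable [DecidableEq k]

lemma PosDef.inv_sub_inv_posSemidef {A B : Matrix k k ℝ} (hA : A.PosDef) (hB : B.PosDef)
    (hAB : (B - A).PosSemidef) : (A⁻¹ - B⁻¹).PosSemidef := by
  have hAu : IsUnit A.det := hA.det_pos.ne'.isUnit
  have hBu : IsUnit B.det := hB.det_pos.ne'.isUnit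
  set D := B - A
  have hBinv : (B⁻¹)ᵀ = B⁻¹ := hB.inv.posSemidef.transpose_eq
  have key : A⁻¹ - B⁻¹ = B⁻¹ * D * B⁻¹ + (B⁻¹ * D) * A⁻¹ * (B⁻¹ * D)ᵀ := by
    rw [transpose_mul, hAB.transpose_eq, hBinv]
    calc A⁻¹ - B⁻¹ = B⁻¹ * D * A⁻¹ * B * B⁻¹ := by
          simp only [D, mul_sub, sub_mul, mul_nonsing_inv _ hBu, nonsing_inv_mul _ hBu,
            mul_nonsing_inv _ hAu, mul_assoc, mul_one, one_mul]
      _ = B⁻¹ * D * A⁻¹ * (A + D) * B⁻¹ := by simp [D]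
      _ = _ := by simp only [mul_add, add_mul, mul_assoc, nonsing_inv_mul _ hAu, mul_one]
  rw [key]
  have h₁ := hAB.mul_mul_transpose_same_s14 B⁻¹
  rw [hBinv] at h₁
  exact h₁.add (hA.inv.posSemidef.mul_mul_transpose_same_s14 _)

end Loewner

end Matrix

section Covariance

variable {k ι : Type*} [Fintype ι] {m : ι → Type*} [∀ j, Fintype (m j)]
  [∀ j, DecidableEq (m j)]

/-- With `Q = P⁻¹` this is `P⁻¹ + Φ` (for the actual `R`) or `P⁻¹ + Φᶠ` (for the nominal `Rᵘ`),
whose inverses are `Σ` and `Σᶠ`. -/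
noncomputable def fusedInformation (Q : Matrix k k ℝ) (H : ∀ j, Matrix (m j) k ℝ)
    (R : ∀ j, Matrix (m j) (m j) ℝ) (a : ι → ℝ) : Matrix k k ℝ :=
  Q + ∑ j, a j • ((H j)ᵀ * (R j)⁻¹ * H j)

variable {Q : Matrix k k ℝ} {H : ∀ j, Matrix (m j) k ℝ} {R Ru : ∀ j, Matrix (m j) (m j) ℝ}

lemma fusedInformation_one :
    fusedInformation Q H R 1 = Q + ∑ j, (H j)ᵀ * (R j)⁻¹ * H j := by
  simp [fusedInformation]

variable [Fintype k]

lemma posDef_fusedInformation (hQ : Q.PosDef) (hR : ∀ j, (R j).PosDef) {a : ι → ℝ}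
    (ha : 0 ≤ a) : (fusedInformation Q H R a).PosDef :=
  hQ.add_posSemidef <| posSemidef_sum _ fun j _ => by
    have h := (hR j).inv.posSemidef.mul_mul_transpose_same_s14 (H j)ᵀ
    rw [transpose_transpose] at h
    exact h.smul (ha j)

variable [DecidableEq k]

/-- `Σᵗ` (with `Q = P⁻¹`): the actual covariance of the estimate fused with the nominal noise
covariances `Ru` when the measurement noise covariances are in fact `R`. -/
noncomputable def actualCovariance (Q : Matrix k k ℝ) (H : ∀ j, Matrix (m j) k ℝ)
    (R Ru : ∀ j, Matrix (m j) (m j) ℝ) (a : ι → ℝ) : Matrix k k ℝ :=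
  (fusedInformation Q H Ru a)⁻¹ * Q * (fusedInformation Q H Ru a)⁻¹ +
    (fusedInformation Q H Ru a)⁻¹ *
      (∑ j, a j ^ 2 • ((H j)ᵀ * (Ru j)⁻¹ * R j * (Ru j)⁻¹ * H j)) *
        (fusedInformation Q H Ru a)⁻¹

lemma actualCovariance_one :
    actualCovariance Q H R Ru 1 =
      (fusedInformation Q H Ru 1)⁻¹ * Q * (fusedInformation Q H Ru 1)⁻¹ +
        (fusedInformation Q H Ru 1)⁻¹ *
          (∑ j, (H j)ᵀ * (Ru j)⁻¹ * R j * (Ru j)⁻¹ * H j) *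
            (fusedInformation Q H Ru 1)⁻¹ := by
  simp [actualCovariance]

lemma fusedInformation_inv_sub_actualCovariance (hQ : Q.PosDef) (hRu : ∀ j, (Ru j).PosDef) :
    (fusedInformation Q H Ru 1)⁻¹ - actualCovariance Q H R Ru 1 =
      ∑ j, ((fusedInformation Q H Ru 1)⁻¹ * (H j)ᵀ * (Ru j)⁻¹) * (Ru j - R j) *
        ((fusedInformation Q H Ru 1)⁻¹ * (H j)ᵀ * (Ru j)⁻¹)ᵀ := by
  have hB := posDef_fusedInformation (H := H) hQ hRu zero_le_one
  rw [actualCovariance_one]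
  set K := (fusedInformation Q H Ru 1)⁻¹
  have hK : Kᵀ = K := hB.inv.posSemidef.transpose_eq
  have hKK : K = K * Q * K + K * (∑ j, (H j)ᵀ * (Ru j)⁻¹ * H j) * K := by
    rw [← add_mul, ← mul_add, mul_assoc, ← fusedInformation_one,
      mul_nonsing_inv _ hB.det_pos.ne'.isUnit, mul_one]
  have hterm : ∀ j,
      (K * (H j)ᵀ * (Ru j)⁻¹) * (Ru j - R j) * (K * (H j)ᵀ * (Ru j)⁻¹)ᵀ =
      K * ((H j)ᵀ * (Ru j)⁻¹ * H j) * K -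
        K * ((H j)ᵀ * (Ru j)⁻¹ * R j * (Ru j)⁻¹ * H j) * K := by
    intro j
    rw [transpose_mul, transpose_mul, hK, transpose_transpose,
      (hRu j).inv.posSemidef.transpose_eq]
    simp only [Matrix.sub_mul, Matrix.mul_sub, Matrix.mul_assoc,
      mul_nonsing_inv_cancel_left _ _ (hRu j).det_pos.ne'.isUnit]
  rw [sum_congr rfl fun j _ => hterm j, sum_sub_distrib, ← sum_mul, ← mul_sum, ← sum_mul,
    ← mul_sum]
  nth_rewrite 1 [hKK]
  abel

lemma fusedInformation_inv_sub_actualCovariance_posSemidef (hQ : Q.PosDef)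
    (hRu : ∀ j, (Ru j).PosDef) (hle : ∀ j, (Ru j - R j).PosSemidef) :
    ((fusedInformation Q H Ru 1)⁻¹ - actualCovariance Q H R Ru 1).PosSemidef := by
  rw [fusedInformation_inv_sub_actualCovariance hQ hRu]
  exact posSemidef_sum _ fun j _ => (hle j).mul_mul_transpose_same_s14 _

lemma actualCovariance_self_one (hQ : Q.PosDef) (hR : ∀ j, (R j).PosDef) :
    actualCovariance Q H R R 1 = (fusedInformation Q H R 1)⁻¹ := by
  have h := fusedInformation_inv_sub_actualCovariance (H := H) (R := R) hQ hR
  simp only [sub_self, Matrix.mul_zero, Matrix.zero_mul, sum_const_zero] at h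
  exact (sub_eq_zero.1 h).symm

lemma actualCovariance_sub_fusedInformation_inv_posSemidef (hQ : Q.PosDef)
    (hR : ∀ j, (R j).PosDef) (hRu : ∀ j, (Ru j).PosDef) :
    (actualCovariance Q H R Ru 1 - (fusedInformation Q H R 1)⁻¹).PosSemidef := by
  have hA := posDef_fusedInformation (H := H) hQ hR zero_le_one
  have hB := posDef_fusedInformation (H := H) hQ hRu zero_le_one
  rw [actualCovariance_one]
  set S := (fusedInformation Q H R 1)⁻¹
  set K := (fusedInformation Q H Ru 1)⁻¹
  have hS : Sᵀ = S := hA.inv.posSemidef.transpose_eq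
  have hK : Kᵀ = K := hB.inv.posSemidef.transpose_eq
  have hKQS : K * Q * S = S - K * (∑ j, (H j)ᵀ * (Ru j)⁻¹ * H j) * S := by
    rw [eq_sub_iff_add_eq, ← add_mul, ← mul_add, ← fusedInformation_one,
      nonsing_inv_mul _ hB.det_pos.ne'.isUnit, one_mul]
  have hSQK : S * Q * K = S - S * (∑ j, (H j)ᵀ * (Ru j)⁻¹ * H j) * K := by
    rw [eq_sub_iff_add_eq, ← add_mul, ← mul_add, ← fusedInformation_one, mul_assoc,
      mul_nonsing_inv _ hB.det_pos.ne'.isUnit, mul_one]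
  have hSQS : S * Q * S = S - S * (∑ j, (H j)ᵀ * (R j)⁻¹ * H j) * S := by
    rw [eq_sub_iff_add_eq, ← add_mul, ← mul_add, ← fusedInformation_one,
      nonsing_inv_mul _ hA.det_pos.ne'.isUnit, one_mul]
  -- `Xⱼ` is the difference between the suboptimal and the optimal gain of sensor `j`
  set X : ∀ j, Matrix k (m j) ℝ := fun j => K * (H j)ᵀ * (Ru j)⁻¹ - S * (H j)ᵀ * (R j)⁻¹
  have hterm : ∀ j, X j * R j * (X j)ᵀ =
      K * ((H j)ᵀ * (Ru j)⁻¹ * R j * (Ru j)⁻¹ * H j) * K -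
        K * ((H j)ᵀ * (Ru j)⁻¹ * H j) * S - S * ((H j)ᵀ * (Ru j)⁻¹ * H j) * K +
          S * ((H j)ᵀ * (R j)⁻¹ * H j) * S := by
    intro j
    have hRj := (hR j).det_pos.ne'.isUnit
    simp only [X, transpose_sub, transpose_mul, transpose_transpose, hS, hK,
      (hR j).inv.posSemidef.transpose_eq, (hRu j).inv.posSemidef.transpose_eq,
      Matrix.sub_mul, Matrix.mul_sub, Matrix.mul_assoc, mul_nonsing_inv_cancel_left _ _ hRj,
      nonsing_inv_mul_cancel_left _ _ hRj]
    abel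
  have hid : K * Q * K + K * (∑ j, (H j)ᵀ * (Ru j)⁻¹ * R j * (Ru j)⁻¹ * H j) * K - S =
      (K - S) * Q * (K - S)ᵀ + ∑ j, X j * R j * (X j)ᵀ := by
    rw [sum_congr rfl fun j _ => hterm j]
    simp only [sum_add_distrib, sum_sub_distrib, ← sum_mul, ← mul_sum]
    rw [transpose_sub, hK, hS]
    simp only [Matrix.sub_mul, Matrix.mul_sub]
    rw [hKQS, hSQK, hSQS]
    abel
  rw [hid]
  exact (hQ.posSemidef.mul_mul_transpose_same_s14 _).add
    (posSemidef_sum _ fun j _ => (hR j).posSemidef.mul_mul_transpose_same_s14 (X j))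

lemma fusedInformation_inv_sub_inv_posSemidef (hQ : Q.PosDef) (hR : ∀ j, (R j).PosDef)
    (hRu : ∀ j, (Ru j).PosDef) (hle : ∀ j, (R j - Ru j).PosSemidef) {a : ι → ℝ}
    (ha : 0 ≤ a) :
    ((fusedInformation Q H R a)⁻¹ - (fusedInformation Q H Ru a)⁻¹).PosSemidef := by
  refine (posDef_fusedInformation hQ hR ha).inv_sub_inv_posSemidef
    (posDef_fusedInformation hQ hRu ha) ?_
  rw [fusedInformation, fusedInformation, add_sub_add_left_eq_sub, ← sum_sub_distrib]
  refine posSemidef_sum _ fun j _ => ?_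
  have h := ((hRu j).inv_sub_inv_posSemidef (hR j) (hle j)).mul_mul_transpose_same_s14 (H j)ᵀ
  rw [transpose_transpose, Matrix.mul_sub, Matrix.sub_mul] at h
  rw [← smul_sub]
  exact h.smul (ha j)

lemma continuousAt_fusedInformation_inv {a₀ : ι → ℝ}
    (h : (fusedInformation Q H R a₀).det ≠ 0) :
    ContinuousAt (fun a => (fusedInformation Q H R a)⁻¹) a₀ := by
  refine (continuousAt_matrix_inv _ ?_).comp (f := fun a => fusedInformation Q H R a)
    (continuous_const.add <| continuous_finsetSum _ fun j _ =>
      (continuous_apply j).smul continuous_const).continuousAt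
  simpa [Ring.inverse_eq_inv'] using continuousAt_inv₀ h

lemma tendsto_actualCovariance_self_sub_fusedInformation_inv (hQ : Q.PosDef)
    (hR : ∀ j, (R j).PosDef) :
    Tendsto (fun a => actualCovariance Q H R R a - (fusedInformation Q H R a)⁻¹) (𝓝 1)
      (𝓝 0) := by
  have hinv : ContinuousAt (fun a => (fusedInformation Q H R a)⁻¹) 1 :=
    continuousAt_fusedInformation_inv (posDef_fusedInformation hQ hR zero_le_one).det_pos.ne'
  have hsum : Continuous fun a : ι → ℝ =>
      ∑ j, a j ^ 2 • ((H j)ᵀ * (R j)⁻¹ * R j * (R j)⁻¹ * H j) :=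
    continuous_finsetSum _ fun j _ => ((continuous_apply j).pow 2).smul continuous_const
  have h : ContinuousAt
      (fun a => actualCovariance Q H R R a - (fusedInformation Q H R a)⁻¹) 1 :=
    (((hinv.mul continuousAt_const).mul hinv).add ((hinv.mul hsum.continuousAt).mul hinv)).sub
      hinv
  simpa only [actualCovariance_self_one hQ hR, sub_self] using h.tendsto

end Covariance

section Oscillation

variable {n : Type*} [Fintype n] [Nonempty n]

noncomputable def spread (v : n → ℝ) : ℝ :=
  univ.sup' univ_nonempty v - univ.inf' univ_nonempty v

lemma abs_sub_average_le_spread (v : n → ℝ) (i : n) :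
    |v i - (∑ p, v p) / Fintype.card n| ≤ spread v := by
  have hcard : (0 : ℝ) < Fintype.card n := Nat.cast_pos.mpr Fintype.card_pos
  have hi₁ := univ.inf'_le v (mem_univ i)
  have hi₂ := univ.le_sup' v (mem_univ i)
  have hs₁ : Fintype.card n * univ.inf' univ_nonempty v ≤ ∑ p, v p := by
    simpa using card_nsmul_le_sum univ v _ fun p _ => univ.inf'_le v (mem_univ p)
  have hs₂ : ∑ p, v p ≤ Fintype.card n * univ.sup' univ_nonempty v := by
    simpa using sum_le_card_nsmul univ v _ fun p _ => univ.le_sup' v (mem_univ p)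
  have hm₁ : univ.inf' univ_nonempty v ≤ (∑ p, v p) / Fintype.card n := by
    rw [le_div_iff₀ hcard]; linarith
  have hm₂ : (∑ p, v p) / Fintype.card n ≤ univ.sup' univ_nonempty v := by
    rw [div_le_iff₀ hcard]; linarith
  rw [spread, abs_le]
  constructor <;> linarith

variable [DecidableEq n]

lemma spread_mulVec_le {A : Matrix n n ℝ} (hA : A ∈ rowStochastic ℝ n) {δ : ℝ}
    (hδ : ∀ p q, δ ≤ A p q) (v : n → ℝ) :
    spread (A *ᵥ v) ≤ (1 - Fintype.card n * δ) * spread v := by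
  set S := univ.sup' univ_nonempty v
  set I := univ.inf' univ_nonempty v
  have hrow : ∀ p, ∑ q, (A p q - δ) = 1 - Fintype.card n * δ := fun p => by
    simp [sum_sub_distrib, sum_row_of_mem_rowStochastic hA]
  have hsplit : ∀ p, (A *ᵥ v) p = ∑ q, (A p q - δ) * v q + δ * ∑ q, v q := fun p => by
    simp only [mulVec, dotProduct, sub_mul, sum_sub_distrib, mul_sum]
    ring
  obtain ⟨p, -, hp⟩ := exists_mem_eq_sup' univ_nonempty (A *ᵥ v)
  obtain ⟨r, -, hr⟩ := exists_mem_eq_inf' univ_nonempty (A *ᵥ v)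
  unfold spread
  rw [hp, hr, hsplit, hsplit]
  have hup : ∑ q, (A p q - δ) * v q ≤ ∑ q, (A p q - δ) * S :=
    sum_le_sum fun q _ => mul_le_mul_of_nonneg_left (univ.le_sup' v (mem_univ q))
      (sub_nonneg.2 (hδ p q))
  have hdown : ∑ q, (A r q - δ) * I ≤ ∑ q, (A r q - δ) * v q :=
    sum_le_sum fun q _ => mul_le_mul_of_nonneg_left (univ.inf'_le v (mem_univ q))
      (sub_nonneg.2 (hδ r q))
  rw [← sum_mul, hrow] at hup
  rw [← sum_mul, hrow] at hdown
  linarith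

lemma card_mul_le_one_of_mem_rowStochastic {A : Matrix n n ℝ} (hA : A ∈ rowStochastic ℝ n)
    {δ : ℝ} (hδ : ∀ p q, δ ≤ A p q) : Fintype.card n * δ ≤ 1 := by
  obtain ⟨p⟩ := ‹Nonempty n›
  simpa [← sum_row_of_mem_rowStochastic hA p] using sum_le_sum fun q (_ : q ∈ univ) => hδ p q

lemma spread_mulVec_le_of_mem_rowStochastic {A : Matrix n n ℝ} (hA : A ∈ rowStochastic ℝ n)
    (v : n → ℝ) : spread (A *ᵥ v) ≤ spread v := by
  simpa using spread_mulVec_le hA (fun p q => nonneg_of_mem_rowStochastic hA) v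

lemma spread_pow_mulVec_le {A : Matrix n n ℝ} (hA : A ∈ rowStochastic ℝ n) {δ : ℝ}
    (hδ : ∀ p q, δ ≤ A p q) (v : n → ℝ) (k : ℕ) :
    spread (A ^ k *ᵥ v) ≤ (1 - Fintype.card n * δ) ^ k * spread v := by
  induction k with
  | zero => simp
  | succ k ih =>
    rw [pow_succ', ← mulVec_mulVec, pow_succ', mul_assoc]
    exact (spread_mulVec_le hA hδ _).trans <| mul_le_mul_of_nonneg_left ih <|
      sub_nonneg.2 (card_mul_le_one_of_mem_rowStochastic hA hδ)

lemma spread_pow_mulVec_le_of_pow {W : Matrix n n ℝ} (hW : W ∈ rowStochastic ℝ n) {M : ℕ}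
    {δ : ℝ} (hδ : ∀ p q, δ ≤ (W ^ M) p q) (v : n → ℝ) (L : ℕ) :
    spread (W ^ L *ᵥ v) ≤ (1 - Fintype.card n * δ) ^ (L / M) * spread v := by
  conv_lhs => rw [← Nat.mod_add_div L M, pow_add, ← mulVec_mulVec, pow_mul]
  exact (spread_mulVec_le_of_mem_rowStochastic (pow_mem hW _) _).trans <|
    spread_pow_mulVec_le (pow_mem hW M) hδ v _

end Oscillation

section Markov

variable {n : Type*} [Fintype n] [DecidableEq n]

lemma isPrimitive_of_forall_exists_pow_pos {W : Matrix n n ℝ} (hW : ∀ p q, 0 ≤ W p q)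
    (hdiag : ∀ p, 0 < W p p) (hconn : ∀ p q, ∃ m, 0 < (W ^ m) p q) : W.IsPrimitive := by
  -- a positive diagonal keeps positive entries of `W ^ m` positive in all higher powers
  have hsucc : ∀ m p q, 0 < (W ^ m) p q → 0 < (W ^ (m + 1)) p q := fun m p q h => by
    rw [pow_succ, mul_apply]
    exact (mul_pos h (hdiag q)).trans_le <| single_le_sum
      (f := fun r => (W ^ m) p r * W r q)
      (fun r _ => mul_nonneg (pow_apply_nonneg hW m p r) (hW r q)) (mem_univ q)
  have hmono : ∀ p q m m', m ≤ m' → 0 < (W ^ m) p q → 0 < (W ^ m') p q :=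
    fun p q m m' h hpos => by
      induction m', h using Nat.le_induction with
      | base => exact hpos
      | succ k _ ih => exact hsucc k p q ih
  choose f hf using hconn
  refine ⟨hW, univ.sup (fun pq : n × n => f pq.1 pq.2) + 1, Nat.succ_pos _, fun p q => ?_⟩
  exact hmono p q _ _ ((le_sup (f := fun pq : n × n => f pq.1 pq.2) (mem_univ (p, q))).trans
    (Nat.le_succ _)) (hf p q)

theorem tendsto_pow_apply_of_isPrimitive {W : Matrix n n ℝ} (hW : W ∈ doublyStochastic ℝ n)
    (hprim : W.IsPrimitive) (i j : n) :
    Tendsto (fun L => (W ^ L) i j) atTop (𝓝 (Fintype.card n : ℝ)⁻¹) := by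
  have : Nonempty n := ⟨i⟩
  have hrow : W ∈ rowStochastic ℝ n :=
    (mem_doublyStochastic_iff_mem_rowStochastic_and_mem_colStochastic.1 hW).1
  obtain ⟨-, M, hM0, hM⟩ := hprim
  set δ := univ.inf' univ_nonempty fun pq : n × n => (W ^ M) pq.1 pq.2
  have hδ : ∀ p q, δ ≤ (W ^ M) p q := fun p q => inf'_le _ (mem_univ (p, q))
  have hδpos : 0 < δ := (lt_inf'_iff _).2 fun pq _ => hM pq.1 pq.2
  set c := 1 - Fintype.card n * δ
  have hc₀ : 0 ≤ c := sub_nonneg.2 <| card_mul_le_one_of_mem_rowStochastic (pow_mem hrow M) hδ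
  have hc₁ : c < 1 := sub_lt_self _ (mul_pos (Nat.cast_pos.2 Fintype.card_pos) hδpos)
  -- the `j`-th column of `W ^ L` is `W ^ L *ᵥ eⱼ`, whose entries average to `1 / |n|`
  have hbound : ∀ L, dist ((W ^ L) i j) (Fintype.card n : ℝ)⁻¹ ≤
      c ^ (L / M) * spread (Pi.single j 1 : n → ℝ) := fun L => by
    have h := abs_sub_average_le_spread (W ^ L *ᵥ Pi.single j 1) i
    have hcol : ∀ p, (W ^ L *ᵥ Pi.single j 1) p = (W ^ L) p j := by simp
    simp only [hcol, sum_col_of_mem_doublyStochastic (pow_mem hW L), one_div] at h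
    rw [Real.dist_eq]
    exact h.trans (spread_pow_mulVec_le_of_pow hrow hδ _ L)
  refine tendsto_iff_dist_tendsto_zero.2 <| squeeze_zero (fun _ => dist_nonneg) hbound ?_
  simpa using ((tendsto_pow_atTop_nhds_zero_of_lt_one hc₀ hc₁).comp
    (Nat.tendsto_div_const_atTop hM0.ne')).mul_const (spread (Pi.single j 1 : n → ℝ))

end Markov

theorem stmt14_general {n N : ℕ}
    (md : Fin N → ℕ)
    (H : ∀ j, Matrix (Fin (md j)) (Fin n) ℝ)
    (R Ru : ∀ j, Matrix (Fin (md j)) (Fin (md j)) ℝ)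
    (hR : ∀ j, (R j).PosDef) (hRu : ∀ j, (Ru j).PosDef)
    (dR : ∀ j, Matrix (Fin (md j)) (Fin (md j)) ℝ)
    (hdR : ∀ j, dR j = Ru j - R j)
    (P : Matrix (Fin n) (Fin n) ℝ) (hP : P.PosDef)
    (W : Matrix (Fin N) (Fin N) ℝ)
    (hnonneg : ∀ p q, 0 ≤ W p q)
    (hrow : ∀ p, ∑ q, W p q = 1)
    (hcol : ∀ q, ∑ p, W p q = 1)
    (hdiag : ∀ p, 0 < W p p)
    (hconn : ∀ p q, ∃ m : ℕ, 0 < (W ^ m) p q)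
    (i : Fin N)
    (Phi Phif Phit Sig Sigf Sigt : (Fin N → ℝ) → Matrix (Fin n) (Fin n) ℝ)
    (hPhi : ∀ a, Phi a = ∑ j, a j • ((H j)ᵀ * (R j)⁻¹ * H j))
    (hPhif : ∀ a, Phif a = ∑ j, a j • ((H j)ᵀ * (Ru j)⁻¹ * H j))
    (hPhit : ∀ a, Phit a =
      ∑ j, (a j) ^ 2 • ((H j)ᵀ * (Ru j)⁻¹ * R j * (Ru j)⁻¹ * H j))
    (hSig : ∀ a, Sig a = (P⁻¹ + Phi a)⁻¹)
    (hSigf : ∀ a, Sigf a = (P⁻¹ + Phif a)⁻¹)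
    (hSigt : ∀ a, Sigt a = Sigf a * P⁻¹ * Sigf a + Sigf a * Phit a * Sigf a) :
    ((∀ j, (dR j).PosSemidef) →
      (Sigt (fun _ => 1) - Sig (fun _ => 1)).PosSemidef ∧
      (Sigf (fun _ => 1) - Sigt (fun _ => 1)).PosSemidef) ∧
    ((∀ j, (-(dR j)).PosSemidef) →
      (Sig (fun _ => 1) - Sigf (fun _ => 1)).PosSemidef ∧
      (Sigt (fun _ => 1) - Sig (fun _ => 1)).PosSemidef) ∧
    ((∀ j, dR j = 0) →
      (∀ a : Fin N → ℝ, (∀ j, 0 ≤ a j) → Sigf a = Sig a) ∧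
      (∀ p q, Tendsto
        (fun L : ℕ => (Sigt (fun j => (N : ℝ) * (W ^ L) i j)
          - Sig (fun j => (N : ℝ) * (W ^ L) i j)) p q) atTop (nhds 0))) := by
  obtain rfl : Sig = fun a => (fusedInformation P⁻¹ H R a)⁻¹ := funext fun a => by
    rw [hSig, hPhi, fusedInformation]
  obtain rfl : Sigf = fun a => (fusedInformation P⁻¹ H Ru a)⁻¹ := funext fun a => by
    rw [hSigf, hPhif, fusedInformation]
  obtain rfl : Sigt = actualCovariance P⁻¹ H R Ru := funext fun a => by
    rw [hSigt, hPhit, actualCovariance]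
  have hopt := actualCovariance_sub_fusedInformation_inv_posSemidef (H := H) hP.inv hR hRu
  refine ⟨fun hpos => ⟨hopt, ?_⟩, fun hneg => ⟨?_, hopt⟩, fun hzero => ?_⟩
  · exact fusedInformation_inv_sub_actualCovariance_posSemidef hP.inv hRu
      fun j => hdR j ▸ hpos j
  · exact fusedInformation_inv_sub_inv_posSemidef hP.inv hR hRu
      (fun j => by simpa [hdR j] using hneg j) zero_le_one
  obtain rfl : Ru = R := funext fun j => sub_eq_zero.1 <| (hdR j).symm.trans (hzero j)
  refine ⟨fun a _ => rfl, fun p q => ?_⟩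
  have hN : (N : ℝ) ≠ 0 := Nat.cast_ne_zero.2 (Fin.pos i).ne'
  have hweights : Tendsto (fun L j => (N : ℝ) * (W ^ L) i j) atTop (𝓝 1) :=
    tendsto_pi_nhds.2 fun j => by
      simpa [hN] using (tendsto_pow_apply_of_isPrimitive
        (mem_doublyStochastic_iff_sum.2 ⟨hnonneg, hrow, hcol⟩)
        (isPrimitive_of_forall_exists_pow_pos hnonneg hdiag hconn) i j).const_mul (N : ℝ)
  exact (continuous_apply_apply p q).continuousAt.tendsto.comp <|
    (tendsto_actualCovariance_self_sub_fusedInformation_inv hP.inv hR).comp hweights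

/-- Theorem 4 of the paper (case `ΔQ = 0`, asymptotic inequalities stated at the
limiting unit weights `aⱼ = 1`): (1) `ΔRⱼ ⪰ 0` for all `j` implies `Σ ⪯ Σᵗ ⪯ Σᶠ`;
(2) `ΔRⱼ ⪯ 0` for all `j` implies `Σᶠ ⪯ Σ ⪯ Σᵗ`; (3) `ΔRⱼ = 0` for all `j` implies
`Σᶠ = Σ` for any nonnegative weights, and `Σ^{t(L)} − Σ^{(L)} → 0` entrywise as
`L → ∞`. -/
theorem stmt14 {n N : ℕ} (hn : 1 ≤ n) (hN : 1 ≤ N)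
    (md : Fin N → ℕ) (hmd : ∀ j, 1 ≤ md j)
    (H : ∀ j, Matrix (Fin (md j)) (Fin n) ℝ)
    (R Ru : ∀ j, Matrix (Fin (md j)) (Fin (md j)) ℝ)
    (hRsymm : ∀ j, (R j).IsSymm) (hRusymm : ∀ j, (Ru j).IsSymm)
    (hR : ∀ j, (R j).PosDef) (hRu : ∀ j, (Ru j).PosDef)
    (dR : ∀ j, Matrix (Fin (md j)) (Fin (md j)) ℝ)
    (hdR : ∀ j, dR j = Ru j - R j)
    (P : Matrix (Fin n) (Fin n) ℝ) (hPsymm : P.IsSymm) (hP : P.PosDef)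
    (W : Matrix (Fin N) (Fin N) ℝ)
    (hnonneg : ∀ p q, 0 ≤ W p q)
    (hrow : ∀ p, ∑ q, W p q = 1)
    (hcol : ∀ q, ∑ p, W p q = 1)
    (hdiag : ∀ p, 0 < W p p)
    (hconn : ∀ p q, ∃ m : ℕ, 0 < (W ^ m) p q)
    (i : Fin N)
    (Phi Phif Phit Sig Sigf Sigt : (Fin N → ℝ) → Matrix (Fin n) (Fin n) ℝ)
    (hPhi : ∀ a, Phi a = ∑ j, a j • ((H j)ᵀ * (R j)⁻¹ * H j))
    (hPhif : ∀ a, Phif a = ∑ j, a j • ((H j)ᵀ * (Ru j)⁻¹ * H j))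
    (hPhit : ∀ a, Phit a =
      ∑ j, (a j) ^ 2 • ((H j)ᵀ * (Ru j)⁻¹ * R j * (Ru j)⁻¹ * H j))
    (hSig : ∀ a, Sig a = (P⁻¹ + Phi a)⁻¹)
    (hSigf : ∀ a, Sigf a = (P⁻¹ + Phif a)⁻¹)
    (hSigt : ∀ a, Sigt a = Sigf a * P⁻¹ * Sigf a + Sigf a * Phit a * Sigf a) :
    ((∀ j, (dR j).PosSemidef) →
      (Sigt (fun _ => 1) - Sig (fun _ => 1)).PosSemidef ∧
      (Sigf (fun _ => 1) - Sigt (fun _ => 1)).PosSemidef) ∧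
    ((∀ j, (-(dR j)).PosSemidef) →
      (Sig (fun _ => 1) - Sigf (fun _ => 1)).PosSemidef ∧
      (Sigt (fun _ => 1) - Sig (fun _ => 1)).PosSemidef) ∧
    ((∀ j, dR j = 0) →
      (∀ a : Fin N → ℝ, (∀ j, 0 ≤ a j) → Sigf a = Sig a) ∧
      (∀ p q, Tendsto
        (fun L : ℕ => (Sigt (fun j => (N : ℝ) * (W ^ L) i j)
          - Sig (fun j => (N : ℝ) * (W ^ L) i j)) p q) atTop (nhds 0))) :=
  stmt14_general md H R Ru hR hRu dR hdR P hP W hnonneg hrow hcol hdiag hconn i Phi Phif Phit Sig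
    Sigf Sigt hPhi hPhif hPhit hSig hSigf hSigt
end
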